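/- The marginal distribution of the McKean tree Markov chain equals the tree weights: if (τ_n)_{n≥1} is the Markov chain on trees with τ_1 = t_1 almost surely and transition probabilities P[τ_{n+1} = t_{n,k} | τ_n = t_n] = 1/n for each germination t_{n,k} obtained by appending the two-leaved tree at leaf k ∈ {1,…,n} of t_n (and 0 otherwise), then P[τ_n = t_n] = p_n(t_n) for every n ≥ 1 and every t_n ∈ 𝕋(n). -/

import Mathlib

/-- McKean binary trees. -/
inductive MTree where
  | leaf : MTree
  | node (l r : MTree) : MTree
deriving DecidableEq

/-- Number of leaves of a McKean tree. -/
def MTree.leaves : MTree → ℕ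
  | .leaf => 1
  | .node l r => l.leaves + r.leaves

/-- The weight `p_n(t_n)` of a McKean tree. -/
noncomputable def MTree.weight : MTree → ℝ
  | .leaf => 1
  | .node l r => (1 / ((MTree.node l r).leaves - 1 : ℝ)) * l.weight * r.weight

/-- Germination of a tree at its `k`-th leaf (0-indexed, left-to-right):
the `k`-th leaf is replaced by an internal node with two leaf children. -/
def MTree.germ : MTree → ℕ → MTree
  | .leaf, _ => .node .leaf .leaf
  | .node l r, k =>
      if k < l.leaves then .node (l.germ k) r else .node l (r.germ (k - l.leaves))

/-!
By induction on `n`, it suffices that the weights are carried to themselves by one step of the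
chain: for `s` with `n + 1` leaves, `∑ₜ #{k < n | t.germ k = s} / n * p(t) = p(s)`.
The pairs `(t, k)` with `t.germ k = s` (the parents of `s`) are obtained by pruning a cherry of
`s`, so they can be enumerated recursively through the two subtrees at the root. A parent of
`node l r` has one leaf fewer, hence weight `p(l') p(r) / (|l| + |r| - 2)` or
`p(l) p(r') / (|l| + |r| - 2)`, and induction gives `∑ p(parent) = (|s| - 1) p(s)`.
-/

namespace MTree

theorem leaves_pos (t : MTree) : 0 < t.leaves := by
  induction t with
  | leaf => exact Nat.one_pos
  | node l r ihl _ => exact Nat.add_pos_left ihl _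

theorem leaves_eq_one_iff {t : MTree} : t.leaves = 1 ↔ t = leaf := by
  cases t with
  | leaf => simp [leaves]
  | node l r => have := l.leaves_pos; have := r.leaves_pos; simp [leaves]; omega

theorem weight_node (l r : MTree) :
    (node l r).weight = l.weight * r.weight / ((l.leaves : ℝ) + r.leaves - 1) := by
  simp only [weight, leaves, Nat.cast_add]
  ring

theorem leaves_germ (t : MTree) (k : ℕ) : (t.germ k).leaves = t.leaves + 1 := by
  induction t generalizing k with
  | leaf => rfl
  | node l r ihl ihr => unfold germ; split <;> simp only [leaves, ihl, ihr] <;> omega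

theorem germ_ne_leaf (t : MTree) (k : ℕ) : t.germ k ≠ leaf := by
  cases t with
  | leaf => simp [germ]
  | node l r => unfold germ; split <;> simp

theorem finite_setOf_leaves_eq (n : ℕ) : {t : MTree | t.leaves = n}.Finite := by
  induction n using Nat.strong_induction_on with
  | _ n ih =>
  have hsub : {t : MTree | t.leaves = n} ⊆ {leaf} ∪
      ⋃ a ∈ Finset.Ico 1 n, Set.image2 node {l | l.leaves = a} {r | r.leaves = n - a} := by
    rintro (_ | ⟨l, r⟩) (rfl : leaves _ = n)
    · simp
    · have := l.leaves_pos; have := r.leaves_pos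
      refine Or.inr (Set.mem_biUnion (x := l.leaves) ?_ (Set.mem_image2_of_mem rfl ?_)) <;>
        simp [leaves]
      omega
  refine ((Set.finite_singleton _).union
    ((Finset.Ico 1 n).finite_toSet.biUnion fun a ha => ?_)).subset hsub
  rw [Finset.coe_Ico, Set.mem_Ico] at ha
  exact (ih a ha.2).image2 _ (ih (n - a) (by omega))

noncomputable def withLeaves (n : ℕ) : Finset MTree := (finite_setOf_leaves_eq n).toFinset

theorem mem_withLeaves {n : ℕ} {t : MTree} : t ∈ withLeaves n ↔ t.leaves = n :=
  Set.Finite.mem_toFinset _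

def parents : MTree → Finset (MTree × ℕ)
  | leaf => ∅
  | node l r =>
    if l = leaf ∧ r = leaf then {(leaf, 0)}
    else l.parents.image (fun p => (node p.1 r, p.2)) ∪
      r.parents.image (fun p => (node l p.1, l.leaves + p.2))

theorem lt_leaves_and_germ_eq_of_mem_parents {s t : MTree} {k : ℕ} (h : (t, k) ∈ s.parents) :
    k < t.leaves ∧ t.germ k = s := by
  induction s generalizing t k with
  | leaf => simp [parents] at h
  | node l r ihl ihr =>
    unfold parents at h
    split_ifs at h with hlr
    · obtain ⟨rfl, rfl⟩ := hlr
      obtain ⟨rfl, rfl⟩ := Prod.mk.inj (Finset.mem_singleton.1 h)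
      simp [leaves, germ]
    · rcases Finset.mem_union.1 h with h | h <;>
        obtain ⟨⟨a, j⟩, hmem, hp⟩ := Finset.mem_image.1 h <;>
        obtain ⟨rfl, rfl⟩ := Prod.mk.inj hp
      · obtain ⟨hj, rfl⟩ := ihl hmem
        simp [leaves, germ, hj]; omega
      · obtain ⟨hj, rfl⟩ := ihr hmem
        simp [leaves, germ, hj]

theorem mem_parents_germ {t : MTree} {k : ℕ} (h : k < t.leaves) :
    (t, k) ∈ (t.germ k).parents := by
  induction t generalizing k with
  | leaf => simp [leaves] at h; simp [h, germ, parents]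
  | node a b iha ihb =>
    unfold germ
    split_ifs with hk
    · rw [parents, if_neg fun h => germ_ne_leaf a k h.1]
      exact Finset.mem_union_left _ (Finset.mem_image_of_mem _ (iha hk))
    · rw [parents, if_neg fun h => germ_ne_leaf b _ h.2]
      have hk' : k - a.leaves < b.leaves := by simp only [leaves] at h; omega
      refine Finset.mem_union_right _ (Finset.mem_image.2 ⟨_, ihb hk', ?_⟩)
      simp only [Prod.mk.injEq, true_and]
      omega

theorem mem_parents {s t : MTree} {k : ℕ} :
    (t, k) ∈ s.parents ↔ k < t.leaves ∧ t.germ k = s :=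
  ⟨lt_leaves_and_germ_eq_of_mem_parents, fun ⟨hk, hs⟩ => hs ▸ mem_parents_germ hk⟩

theorem leaves_add_one_of_mem_parents {s t : MTree} {k : ℕ} (h : (t, k) ∈ s.parents) :
    t.leaves + 1 = s.leaves := by
  rw [← (mem_parents.1 h).2, leaves_germ]

theorem sum_weight_parents (s : MTree) :
    ∑ p ∈ s.parents, p.1.weight = ((s.leaves : ℝ) - 1) * s.weight := by
  induction s with
  | leaf => simp [parents, leaves]
  | node l r ihl ihr =>
    by_cases hlr : l = leaf ∧ r = leaf
    · obtain ⟨rfl, rfl⟩ := hlr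
      norm_num [parents, leaves, weight]
    have hN : (3 : ℝ) ≤ l.leaves + r.leaves := by
      have := l.leaves_pos; have := r.leaves_pos
      have : ¬ (l.leaves = 1 ∧ r.leaves = 1) := by simpa only [leaves_eq_one_iff] using hlr
      exact_mod_cast (show 3 ≤ l.leaves + r.leaves by omega)
    have hdisj : Disjoint (l.parents.image fun p => (node p.1 r, p.2))
        (r.parents.image fun p => (node l p.1, l.leaves + p.2)) := by
      simp only [Finset.disjoint_left, Finset.mem_image, not_exists, not_and]
      rintro _ ⟨⟨a, i⟩, ha, rfl⟩ ⟨b, j⟩ - h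
      have hi := (mem_parents.1 ha).1
      have hal := leaves_add_one_of_mem_parents ha
      simp only [Prod.mk.injEq] at h
      omega
    have hl : ∀ p ∈ l.parents, (node p.1 r).weight =
        p.1.weight * (r.weight / (l.leaves + r.leaves - 2)) := by
      rintro ⟨t, k⟩ hp
      have : (t.leaves : ℝ) + 1 = l.leaves := by exact_mod_cast leaves_add_one_of_mem_parents hp
      rw [weight_node, mul_div_assoc, ← this]; ring_nf
    have hr : ∀ p ∈ r.parents, (node l p.1).weight =
        p.1.weight * (l.weight / (l.leaves + r.leaves - 2)) := by
      rintro ⟨t, k⟩ hp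
      have : (t.leaves : ℝ) + 1 = r.leaves := by exact_mod_cast leaves_add_one_of_mem_parents hp
      rw [weight_node, ← this]; ring_nf
    rw [parents, if_neg hlr, Finset.sum_union hdisj, Finset.sum_image, Finset.sum_image,
      Finset.sum_congr rfl hl, Finset.sum_congr rfl hr, ← Finset.sum_mul, ← Finset.sum_mul,
      ihl, ihr, weight_node, leaves, Nat.cast_add]
    · field_simp [show (l.leaves : ℝ) + r.leaves - 2 ≠ 0 by linarith,
        show (l.leaves : ℝ) + r.leaves - 1 ≠ 0 by linarith]
      ring
    all_goals intro p _ q _ h; simpa [Prod.ext_iff] using h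

theorem filter_germ_eq_parents {n : ℕ} {s : MTree} (hs : s.leaves = n + 1) :
    (withLeaves n ×ˢ Finset.range n).filter (fun p => p.1.germ p.2 = s) = s.parents := by
  ext ⟨t, k⟩
  simp only [Finset.mem_filter, Finset.mem_product, mem_withLeaves, Finset.mem_range, mem_parents]
  constructor
  · rintro ⟨⟨rfl, hk⟩, hg⟩
    exact ⟨hk, hg⟩
  · rintro ⟨hk, rfl⟩
    rw [leaves_germ, Nat.add_right_cancel_iff] at hs
    exact ⟨⟨hs, hs ▸ hk⟩, rfl⟩

theorem tsum_germ_transition_weight {n : ℕ} (hn : 1 ≤ n) {s : MTree} (hs : s.leaves = n + 1) :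
    ∑' t : {t : MTree // t.leaves = n},
      (((Finset.range n).filter fun k => (t : MTree).germ k = s).card : ℝ) / n
        * (t : MTree).weight
      = s.weight := by
  have : Fintype {t : MTree // t.leaves = n} := (finite_setOf_leaves_eq n).fintype
  rw [tsum_fintype, ← Finset.sum_subtype (withLeaves n) (fun _ => mem_withLeaves)
    fun t => (((Finset.range n).filter fun k => t.germ k = s).card : ℝ) / n * t.weight]
  have hcount : ∑ t ∈ withLeaves n,
      (((Finset.range n).filter fun k => t.germ k = s).card : ℝ) * t.weight = n * s.weight := by
    simp_rw [← nsmul_eq_mul, ← Finset.sum_const, Finset.sum_filter]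
    rw [← Finset.sum_product
        (f := fun p : MTree × ℕ => if p.1.germ p.2 = s then p.1.weight else 0),
      ← Finset.sum_filter, filter_germ_eq_parents hs, sum_weight_parents, hs]
    push_cast; ring
  simp_rw [div_mul_eq_mul_div, ← Finset.sum_div, hcount]
  field_simp [show (n : ℝ) ≠ 0 by exact_mod_cast Nat.one_le_iff_ne_zero.1 hn]

end MTree

/-- The marginal law of the germination Markov chain on McKean trees equals the
tree weights: if `P n t` denotes `P[τ_n = t]`, where `τ_1` is the one-leaf tree
a.s. and each transition appends the two-leaved tree at a leaf chosen uniformly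
among the `n` leaves, then `P n t = p_n(t)` for every tree `t` with `n` leaves. -/
theorem mckean_chain_marginal
    (P : ℕ → MTree → ℝ)
    (h1 : ∀ t : MTree, P 1 t = if t = MTree.leaf then 1 else 0)
    (hrec : ∀ n : ℕ, 1 ≤ n → ∀ s : MTree,
      P (n + 1) s =
        ∑' t : {t : MTree // t.leaves = n},
          (((Finset.range n).filter fun k => (t : MTree).germ k = s).card : ℝ) / n
            * P n t) :
    ∀ n : ℕ, 1 ≤ n → ∀ t : MTree, t.leaves = n → P n t = t.weight := by
  intro n hn
  induction n, hn using Nat.le_induction with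
  | base =>
    intro t ht
    rw [MTree.leaves_eq_one_iff.1 ht, h1, if_pos rfl, MTree.weight]
  | succ n hn ih =>
    intro s hs
    rw [hrec n hn s, ← MTree.tsum_germ_transition_weight hn hs]
    exact tsum_congr fun t => by rw [ih t t.2]
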